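/- arXiv:1710.00622 — 6 statements merged into one kernel-verified Lean document; each statement's English description precedes it below -/
import Mathlib

section
/- The projective semi-symmetric connection ∇̃ defined by ∇̃_X Y = ∇_X Y + ψ(Y)X + ψ(X)Y + φ(Y)X − φ(X)Y, with φ(X) = (1/2)π(X) and ψ(X) = ((n−1)/(2(n+1)))π(X), satisfies (∇̃_X g)(Y,Z) = (1/(n+1))[2π(X)g(Y,Z) − nπ(Y)g(X,Z) − nπ(Z)g(X,Y)]; in particular ∇̃ is non-metric. -/
/-- Abstract setup for an `n`-dimensional Riemannian manifold: `C` plays the role of the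
ring of smooth functions (an `ℝ`-algebra), `V` the `C`-module of vector fields, `D` the
directional derivative of functions, `bracket` the Lie bracket, `g` the (symmetric) Riemannian
metric, `nabla` the Levi-Civita connection (torsion free and metric compatible), and `xi`
a distinguished unit vector field. -/
structure GeomSetup (n : ℕ) (C : Type*) (V : Type*) [CommRing C] [Algebra ℝ C]
    [AddCommGroup V] [Module C V] where
  D : V → C → C
  D_add : ∀ X f₁ f₂, D X (f₁ + f₂) = D X f₁ + D X f₂
  D_mul : ∀ X f₁ f₂, D X (f₁ * f₂) = f₁ * D X f₂ + f₂ * D X f₁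
  D_addX : ∀ X Y f, D (X + Y) f = D X f + D Y f
  D_smulX : ∀ (f : C) X h, D (f • X) h = f * D X h
  D_const : ∀ X (r : ℝ), D X (algebraMap ℝ C r) = 0
  g : V → V → C
  g_symm : ∀ X Y, g X Y = g Y X
  g_add_left : ∀ X Y Z, g (X + Y) Z = g X Z + g Y Z
  g_smul_left : ∀ (f : C) X Y, g (f • X) Y = f * g X Y
  nabla : V → V → V
  nabla_add_left : ∀ X Y Z, nabla (X + Y) Z = nabla X Z + nabla Y Z
  nabla_smul_left : ∀ (f : C) X Y, nabla (f • X) Y = f • nabla X Y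
  nabla_add_right : ∀ X Y Z, nabla X (Y + Z) = nabla X Y + nabla X Z
  nabla_leibniz : ∀ X (f : C) Y, nabla X (f • Y) = f • nabla X Y + D X f • Y
  bracket : V → V → V
  bracket_eq : ∀ X Y, bracket X Y = nabla X Y - nabla Y X
  compat : ∀ X Y Z, D X (g Y Z) = g (nabla X Y) Z + g Y (nabla X Z)
  xi : V
  xi_unit : g xi xi = 1

namespace GeomSetup

variable {n : ℕ} {C V : Type*} [CommRing C] [Algebra ℝ C] [AddCommGroup V] [Module C V]

/-- The 1-form `π(X) = g(X, ξ)`. -/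
noncomputable def pi1 (s : GeomSetup n C V) (X : V) : C := s.g X s.xi

/-- The 1-form `φ = (1/2) π`. -/
noncomputable def phi (s : GeomSetup n C V) (X : V) : C :=
  algebraMap ℝ C (1 / 2) * s.pi1 X

/-- The 1-form `ψ = ((n-1)/(2(n+1))) π`. -/
noncomputable def psi (s : GeomSetup n C V) (X : V) : C :=
  algebraMap ℝ C (((n : ℝ) - 1) / (2 * ((n : ℝ) + 1))) * s.pi1 X

/-- The projective semi-symmetric connection
`∇̃_X Y = ∇_X Y + ψ(Y)X + ψ(X)Y + φ(Y)X − φ(X)Y`. -/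
noncomputable def tnabla (s : GeomSetup n C V) (X Y : V) : V :=
  s.nabla X Y + s.psi Y • X + s.psi X • Y + s.phi Y • X - s.phi X • Y

/-- The curvature tensor of a connection `nb`:
`R(X,Y)Z = nb_X nb_Y Z − nb_Y nb_X Z − nb_[X,Y] Z`. -/
noncomputable def curv (s : GeomSetup n C V) (nb : V → V → V) (X Y Z : V) : V :=
  nb X (nb Y Z) - nb Y (nb X Z) - nb (s.bracket X Y) Z

/-- The scalar `λ = −n²/(n+1)²` (as an element of `C`). -/
noncomputable def lam (s : GeomSetup n C V) : C :=
  algebraMap ℝ C (-(n : ℝ) ^ 2 / ((n : ℝ) + 1) ^ 2)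

/-- The covariant derivative `(nb_X R)(Y,Z)U` of the curvature tensor of `nb`. -/
noncomputable def covDerCurv (s : GeomSetup n C V) (nb : V → V → V) (X Y Z U : V) : V :=
  nb X (s.curv nb Y Z U) - s.curv nb (nb X Y) Z U - s.curv nb Y (nb X Z) U
    - s.curv nb Y Z (nb X U)

/-- The Ricci tensor (trace of `X ↦ R(X,Y)Z`) of the connection `nb`, computed with respect
to an orthonormal frame `e`. -/
noncomputable def Ric (s : GeomSetup n C V) (e : Fin n → V) (nb : V → V → V) (Y Z : V) : C :=
  ∑ i, s.g (s.curv nb (e i) Y Z) (e i)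

/-- The scalar curvature of the connection `nb` with respect to an orthonormal frame `e`. -/
noncomputable def scal (s : GeomSetup n C V) (e : Fin n → V) (nb : V → V → V) : C :=
  ∑ i, s.Ric e nb (e i) (e i)

end GeomSetup

open GeomSetup

theorem stmt0 {n : ℕ} {C V : Type*} [CommRing C] [Algebra ℝ C]
    [AddCommGroup V] [Module C V] (s : GeomSetup n C V) (hn : 2 ≤ n) (hinj : Function.Injective (algebraMap ℝ C)) :
    (∀ X Y Z : V,
        s.D X (s.g Y Z) - s.g (s.tnabla X Y) Z - s.g Y (s.tnabla X Z) =
          algebraMap ℝ C (1 / ((n : ℝ) + 1)) *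
            (2 * s.pi1 X * s.g Y Z - (n : C) * s.pi1 Y * s.g X Z -
              (n : C) * s.pi1 Z * s.g X Y)) ∧
    ∃ X Y Z : V, s.D X (s.g Y Z) - s.g (s.tnabla X Y) Z - s.g Y (s.tnabla X Z) ≠ 0 := by

  have gsr : ∀ (f : C) (A B : V), s.g A (f • B) = f * s.g A B := fun f A B => by
    rw [s.g_symm, s.g_smul_left, s.g_symm]
  have gar : ∀ (A B B' : V), s.g A (B + B') = s.g A B + s.g A B' := fun A B B' => by
    rw [s.g_symm, s.g_add_left, s.g_symm B A, s.g_symm B' A]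
  have key : ∀ X Y Z : V, s.D X (s.g Y Z) - s.g (s.tnabla X Y) Z - s.g Y (s.tnabla X Z) =
      algebraMap ℝ C (1 / ((n : ℝ) + 1)) *
        (2 * s.pi1 X * s.g Y Z - (n : C) * s.pi1 Y * s.g X Z -
          (n : C) * s.pi1 Z * s.g X Y) := by
    intro X Y Z
    have hn1 : ((n:ℝ)+1) ≠ 0 := by positivity
    have h1 : (2:ℝ) * (1/2) - 2 * (((n:ℝ)-1)/(2*((n:ℝ)+1))) - 2 * (1/((n:ℝ)+1)) = 0 := by
      field_simp
      ring
    have h2 : (1/((n:ℝ)+1)) * (n:ℝ) - (((n:ℝ)-1)/(2*((n:ℝ)+1))) - 1/2 = 0 := by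
      field_simp
      ring
    have h1m := congrArg (algebraMap ℝ C) h1
    have h2m := congrArg (algebraMap ℝ C) h2
    simp only [map_sub, map_mul, map_add, map_one, map_zero, map_ofNat, map_natCast] at h1m h2m
    rw [show ((n:C)) = algebraMap ℝ C (n:ℝ) by rw [map_natCast]]
    simp only [tnabla, phi, psi, pi1, s.compat, sub_eq_add_neg, ← neg_smul,
      s.g_add_left, s.g_smul_left, gar, gsr]
    rw [map_natCast, s.g_symm Y X]
    linear_combination (s.g X s.xi * s.g Y Z) * h1m +
      (s.g Y s.xi * s.g X Z + s.g Z s.xi * s.g X Y) * h2m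
  refine ⟨key, s.xi, s.xi, s.xi, ?_⟩
  rw [key]
  have hval : s.pi1 s.xi = 1 := s.xi_unit
  rw [hval, s.xi_unit]
  intro h
  have h' : algebraMap ℝ C ((1/((n:ℝ)+1)) * (2 - 2*(n:ℝ))) = algebraMap ℝ C 0 := by
    rw [map_zero, ← h]
    simp only [map_mul, map_sub, map_ofNat, map_natCast, map_one]
    ring
  have h'' := hinj h'
  have hn1 : ((n:ℝ)+1) ≠ 0 := by positivity
  have hne : (2:ℝ) - 2*(n:ℝ) ≠ 0 := by
    have : (2:ℝ) ≤ (n:ℝ) := by exact_mod_cast hn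
    linarith
  have : (1/((n:ℝ)+1)) ≠ 0 := by positivity
  exact (mul_ne_zero this hne) h''
end

section
/- If ξ is a parallel unit vector field, then the curvature tensor of the projective semi-symmetric connection satisfies R̃(X,Y)Z = R(X,Y)Z + λ(π(X)π(Z)Y − π(Y)π(Z)X), where λ = −n²/(n+1)². -/
open GeomSetup

section AuxStmt3

variable {n : ℕ} {C V : Type*} [CommRing C] [Algebra ℝ C] [AddCommGroup V] [Module C V]

lemma my_g_zero_left (s : GeomSetup n C V) (Z : V) : s.g 0 Z = 0 := by
  have h : s.g ((0 : C) • Z) Z = 0 * s.g Z Z := s.g_smul_left 0 Z Z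
  simpa using h

lemma my_pi1_add (s : GeomSetup n C V) (X Y : V) :
    s.pi1 (X + Y) = s.pi1 X + s.pi1 Y := s.g_add_left X Y s.xi

lemma my_pi1_smul (s : GeomSetup n C V) (f : C) (X : V) :
    s.pi1 (f • X) = f * s.pi1 X := s.g_smul_left f X s.xi

lemma my_pi1_sub (s : GeomSetup n C V) (X Y : V) :
    s.pi1 (X - Y) = s.pi1 X - s.pi1 Y := by
  have h := my_pi1_add s (X - Y) Y
  rw [sub_add_cancel] at h
  exact eq_sub_of_add_eq h.symm

lemma my_nabla_sub_left (s : GeomSetup n C V) (X Y Z : V) :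
    s.nabla (X - Y) Z = s.nabla X Z - s.nabla Y Z := by
  have h : X - Y = X + (-1 : C) • Y := by rw [neg_one_smul, sub_eq_add_neg]
  rw [h, s.nabla_add_left, s.nabla_smul_left, neg_one_smul, ← sub_eq_add_neg]

lemma my_nabla_sub_right (s : GeomSetup n C V) (X Y Z : V) :
    s.nabla X (Y - Z) = s.nabla X Y - s.nabla X Z := by
  have h : Y - Z = Y + (-1 : C) • Z := by rw [neg_one_smul, sub_eq_add_neg]
  have hc : (-1 : C) = algebraMap ℝ C (-1) := by simp
  rw [h, s.nabla_add_right, s.nabla_leibniz, neg_one_smul, hc, s.D_const, zero_smul,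
    add_zero, ← sub_eq_add_neg]

end AuxStmt3

theorem stmt3 {n : ℕ} {C V : Type*} [CommRing C] [Algebra ℝ C]
    [AddCommGroup V] [Module C V] (s : GeomSetup n C V) (hpar : ∀ X : V, s.nabla X s.xi = 0) :
    ∀ X Y Z : V, s.curv s.tnabla X Y Z =
      s.curv s.nabla X Y Z +
        s.lam • ((s.pi1 X * s.pi1 Z) • Y - (s.pi1 Y * s.pi1 Z) • X) := by
  intro X Y Z
  have hDpi : ∀ A B : V, s.D A (s.pi1 B) = s.pi1 (s.nabla A B) := by
    intro A B
    have h := s.compat A B s.xi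
    rw [hpar A] at h
    have h0 : s.g B 0 = 0 := by rw [s.g_symm, my_g_zero_left]
    rw [h0, add_zero] at h
    exact h
  set a : C := algebraMap ℝ C (((n : ℝ) - 1) / (2 * ((n : ℝ) + 1))) with ha
  set b : C := algebraMap ℝ C ((1 : ℝ) / 2) with hb
  have hDa : ∀ A : V, s.D A a = 0 := fun A => s.D_const A _
  have hDb : ∀ A : V, s.D A b = 0 := fun A => s.D_const A _
  have hpsi : ∀ W : V, s.psi W = a * s.pi1 W := fun W => rfl
  have hphi : ∀ W : V, s.phi W = b * s.pi1 W := by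
    intro W; rw [GeomSetup.phi, hb]
  have hDpsi : ∀ A B : V, s.D A (a * s.pi1 B) = a * s.pi1 (s.nabla A B) := by
    intro A B; rw [s.D_mul, hDpi, hDa]; ring
  have hDphi : ∀ A B : V, s.D A (b * s.pi1 B) = b * s.pi1 (s.nabla A B) := by
    intro A B; rw [s.D_mul, hDpi, hDb]; ring
  have hn : (n : ℝ) + 1 ≠ 0 := by positivity
  have hr : -(n : ℝ) ^ 2 / ((n : ℝ) + 1) ^ 2
      = -((((n : ℝ) - 1) / (2 * ((n : ℝ) + 1)) + 1 / 2) ^ 2) := by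
    field_simp; ring
  have hlam : s.lam = -((a + b) ^ 2) := by
    rw [GeomSetup.lam, hr, map_neg, map_pow, map_add, ha, hb]
  simp only [GeomSetup.curv, GeomSetup.tnabla, s.bracket_eq, hpsi, hphi,
    my_nabla_sub_left, my_nabla_sub_right, s.nabla_add_left, s.nabla_add_right,
    s.nabla_smul_left, s.nabla_leibniz, hDpsi, hDphi,
    my_pi1_add, my_pi1_sub, my_pi1_smul, hlam]
  match_scalars <;> try ring
end

section
/- If ξ is a parallel unit vector field, then the Ricci tensor of the projective semi-symmetric connection satisfies S̃(Y,Z) = S(Y,Z) − λ(n−1)π(Y)π(Z), where λ = −n²/(n+1)², and the scalar curvatures satisfy r̃ = r − λ(n−1). -/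
open GeomSetup


namespace GeomSetup

variable {n : ℕ} {C V : Type*} [CommRing C] [Algebra ℝ C] [AddCommGroup V] [Module C V]
variable (s : GeomSetup n C V)

lemma pi1_add' (X Y : V) : s.pi1 (X + Y) = s.pi1 X + s.pi1 Y := s.g_add_left X Y s.xi

lemma pi1_smul' (f : C) (X : V) : s.pi1 (f • X) = f * s.pi1 X := s.g_smul_left f X s.xi

lemma pi1_sub' (X Y : V) : s.pi1 (X - Y) = s.pi1 X - s.pi1 Y := by
  have : X - Y = X + (-1 : C) • Y := by module
  rw [this, s.pi1_add', s.pi1_smul']; ring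

lemma D_pi1' (hpar : ∀ X : V, s.nabla X s.xi = 0) (X Y : V) :
    s.D X (s.pi1 Y) = s.pi1 (s.nabla X Y) := by
  unfold pi1
  rw [s.compat, hpar, s.g_symm Y 0]
  have : s.g 0 Y = 0 := by
    have := s.g_smul_left 0 0 Y
    simpa using this
  rw [this]; ring

lemma nabla_sub_left' (X Y Z : V) : s.nabla (X - Y) Z = s.nabla X Z - s.nabla Y Z := by
  have h : X - Y = X + (-1 : C) • Y := by module
  rw [h, s.nabla_add_left, s.nabla_smul_left]; module

lemma g_sub_left' (X Y Z : V) : s.g (X - Y) Z = s.g X Z - s.g Y Z := by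
  have h : X - Y = X + (-1 : C) • Y := by module
  rw [h, s.g_add_left, s.g_smul_left]; ring

lemma curv_gen (hpar : ∀ X : V, s.nabla X s.xi = 0) (ca cb : ℝ) (X Y Z : V) :
    s.curv (fun X Y => s.nabla X Y + (algebraMap ℝ C ca * s.pi1 Y) • X
      + (algebraMap ℝ C cb * s.pi1 X) • Y) X Y Z
    = s.curv s.nabla X Y Z
      + ((algebraMap ℝ C ca * s.pi1 Y) * (algebraMap ℝ C ca * s.pi1 Z)) • X
      - ((algebraMap ℝ C ca * s.pi1 X) * (algebraMap ℝ C ca * s.pi1 Z)) • Y := by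
  simp only [curv, s.bracket_eq, s.nabla_sub_left', s.nabla_add_left, s.nabla_add_right,
    s.nabla_smul_left, s.nabla_leibniz, s.D_mul, s.D_const, s.D_pi1' hpar, s.pi1_add',
    s.pi1_smul', s.pi1_sub']
  module

lemma tnabla_eq' :
    s.tnabla = fun X Y => s.nabla X Y
      + (algebraMap ℝ C ((n : ℝ) / ((n : ℝ) + 1)) * s.pi1 Y) • X
      + (algebraMap ℝ C (-1 / ((n : ℝ) + 1)) * s.pi1 X) • Y := by
  funext X Y
  have hn : ((n : ℝ) + 1) ≠ 0 := by positivity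
  have h1 : ((n : ℝ) / ((n : ℝ) + 1))
      = (((n : ℝ) - 1) / (2 * ((n : ℝ) + 1))) + 1 / 2 := by field_simp; ring
  have h2 : (-1 / ((n : ℝ) + 1))
      = (((n : ℝ) - 1) / (2 * ((n : ℝ) + 1))) - 1 / 2 := by field_simp; ring
  simp only [tnabla, psi, phi, h1, h2, map_add, map_sub]
  module

lemma pi1_sum' {ι : Type*} (t : Finset ι) (f : ι → V) :
    s.pi1 (∑ i ∈ t, f i) = ∑ i ∈ t, s.pi1 (f i) := by
  classical
  induction t using Finset.cons_induction with
  | empty =>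
      simp only [Finset.sum_empty]
      have := s.g_smul_left 0 0 s.xi
      unfold pi1; simpa using this
  | cons a t ha ih => simp [Finset.sum_insert ha, Finset.sum_cons, s.pi1_add', ih]

lemma pi1_repr (e : Fin n → V) (hspan : ∀ v : V, v = ∑ i, s.g v (e i) • e i) (Y : V) :
    ∑ i, s.g Y (e i) * s.pi1 (e i) = s.pi1 Y := by
  conv_rhs => rw [hspan Y]
  rw [s.pi1_sum']
  exact Finset.sum_congr rfl fun i _ => (s.pi1_smul' _ _).symm

lemma Ric_tnabla (hpar : ∀ X : V, s.nabla X s.xi = 0) (e : Fin n → V)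
    (horth : ∀ i j, s.g (e i) (e j) = if i = j then 1 else 0)
    (hspan : ∀ v : V, v = ∑ i, s.g v (e i) • e i) (Y Z : V) :
    s.Ric e s.tnabla Y Z =
      s.Ric e s.nabla Y Z - (s.lam * ((n : C) - 1)) * (s.pi1 Y * s.pi1 Z) := by
  set A : C := algebraMap ℝ C ((n : ℝ) / ((n : ℝ) + 1)) with hA
  have key : ∀ i, s.g (s.curv s.tnabla (e i) Y Z) (e i)
      = s.g (s.curv s.nabla (e i) Y Z) (e i)
        + ((A * s.pi1 Y) * (A * s.pi1 Z)) * s.g (e i) (e i)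
        - ((A * s.pi1 (e i)) * (A * s.pi1 Z)) * s.g Y (e i) := by
    intro i
    rw [s.tnabla_eq', s.curv_gen hpar, s.g_sub_left', s.g_add_left, s.g_smul_left,
      s.g_smul_left]
  unfold Ric
  simp only [key, Finset.sum_add_distrib, Finset.sum_sub_distrib, horth, eq_self_iff_true, if_true]
  have h1 : ∑ _i : Fin n, (A * s.pi1 Y) * (A * s.pi1 Z) * 1
      = (n : C) * ((A * s.pi1 Y) * (A * s.pi1 Z)) := by
    simp [Finset.sum_const, nsmul_eq_mul, mul_comm]
  have h2 : ∑ i : Fin n, (A * s.pi1 (e i)) * (A * s.pi1 Z) * s.g Y (e i)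
      = (A * A * s.pi1 Z) * s.pi1 Y := by
    rw [← s.pi1_repr e hspan Y, Finset.mul_sum]
    exact Finset.sum_congr rfl fun i _ => by ring
  rw [h1, h2]
  have hAA : A * A = - s.lam := by
    rw [hA, ← map_mul, lam, ← map_neg]
    congr 1
    have hn0 : ((n : ℝ) + 1) ≠ 0 := by positivity
    field_simp
  linear_combination (((n : C) - 1) * (s.pi1 Y * s.pi1 Z)) * hAA

end GeomSetup

theorem stmt4 {n : ℕ} {C V : Type*} [CommRing C] [Algebra ℝ C]
    [AddCommGroup V] [Module C V] (s : GeomSetup n C V) (hpar : ∀ X : V, s.nabla X s.xi = 0) (e : Fin n → V)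
    (horth : ∀ i j, s.g (e i) (e j) = if i = j then 1 else 0)
    (hspan : ∀ v : V, v = ∑ i, s.g v (e i) • e i) :
    (∀ Y Z : V, s.Ric e s.tnabla Y Z =
        s.Ric e s.nabla Y Z - (s.lam * ((n : C) - 1)) * (s.pi1 Y * s.pi1 Z)) ∧
    s.scal e s.tnabla = s.scal e s.nabla - s.lam * ((n : C) - 1) := by
  have hric := s.Ric_tnabla hpar e horth hspan
  refine ⟨hric, ?_⟩
  unfold GeomSetup.scal
  simp only [hric, Finset.sum_sub_distrib]
  have hx : ∑ i, s.pi1 (e i) * s.pi1 (e i) = 1 := by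
    have h := s.pi1_repr e hspan s.xi
    have h2 : ∀ i, s.g s.xi (e i) = s.pi1 (e i) := fun i => s.g_symm s.xi (e i)
    simp only [h2] at h
    rw [h]
    unfold GeomSetup.pi1
    exact s.xi_unit
  have : ∑ i, s.lam * ((n : C) - 1) * (s.pi1 (e i) * s.pi1 (e i))
      = s.lam * ((n : C) - 1) := by
    rw [← Finset.mul_sum, hx, mul_one]
  rw [this]
end

section
/- Let ξ be a parallel unit vector field. If the Ricci tensor S̃ of the projective semi-symmetric connection vanishes identically, then the Ricci tensor of the Levi-Civita connection satisfies S(Y,Z) = λ(n−1)π(Y)π(Z) with λ = −n²/(n+1)²; i.e., (M,g) is a quasi Einstein manifold with associated scalars a = 0 and b = λ(n−1). -/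
open GeomSetup

theorem stmt9 {n : ℕ} {C V : Type*} [CommRing C] [Algebra ℝ C]
    [AddCommGroup V] [Module C V] (s : GeomSetup n C V) (hn : 2 < n) (hpar : ∀ X : V, s.nabla X s.xi = 0) (e : Fin n → V)
    (horth : ∀ i j, s.g (e i) (e j) = if i = j then 1 else 0)
    (hspan : ∀ v : V, v = ∑ i, s.g v (e i) • e i)
    (hRicFlat : ∀ Y Z : V, s.Ric e s.tnabla Y Z = 0) :
    ∀ Y Z : V, s.Ric e s.nabla Y Z = (s.lam * ((n : C) - 1)) * (s.pi1 Y * s.pi1 Z) := by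
  classical
  have hn1 : (0:ℝ) < (n:ℝ) + 1 := by positivity
  have hn1' : ((n:ℝ) + 1) ≠ 0 := ne_of_gt hn1
  set A : C := algebraMap ℝ C ((n:ℝ) / ((n:ℝ) + 1)) with hA
  set B : C := algebraMap ℝ C (-1 / ((n:ℝ) + 1)) with hB
  -- bundled left-linear metric
  let gL : V → V →ₗ[C] C := fun W =>
    { toFun := fun X => s.g X W
      map_add' := fun X Y => s.g_add_left X Y W
      map_smul' := fun f X => s.g_smul_left f X W }
  let P : V →ₗ[C] C := gL s.xi
  have hP : ∀ X, P X = s.pi1 X := fun _ => rfl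
  have g0 : ∀ X : V, s.g 0 X = 0 := by
    intro X
    have h := s.g_smul_left 0 X X
    simpa using h
  have gsub : ∀ X Y W : V, s.g (X - Y) W = s.g X W - s.g Y W := fun X Y W =>
    map_sub (gL W) X Y
  -- parallel one-form
  have DP : ∀ X Y : V, s.D X (P Y) = P (s.nabla X Y) := by
    intro X Y
    have h := s.compat X Y s.xi
    rw [hpar, s.g_symm _ (0:V), g0, add_zero] at h
    exact h
  have DA : ∀ X : V, s.D X A = 0 := fun X => s.D_const X _
  have DB : ∀ X : V, s.D X B = 0 := fun X => s.D_const X _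
  -- nabla of subtraction in left slot
  have nSubL : ∀ X Y Z : V, s.nabla (X - Y) Z = s.nabla X Z - s.nabla Y Z := by
    intro X Y Z
    rw [sub_eq_add_neg, ← neg_one_smul C Y, s.nabla_add_left, s.nabla_smul_left,
      neg_one_smul, ← sub_eq_add_neg]
  -- tnabla in simplified form
  have hT : ∀ X Y : V, s.tnabla X Y = s.nabla X Y + (A * P Y) • X + (B * P X) • Y := by
    intro X Y
    have hc1 : algebraMap ℝ C (((n:ℝ) - 1) / (2 * ((n:ℝ) + 1))) + algebraMap ℝ C (1/2) = A := by
      rw [hA, ← map_add]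
      congr 1
      field_simp
      ring
    have hc2 : algebraMap ℝ C (((n:ℝ) - 1) / (2 * ((n:ℝ) + 1))) - algebraMap ℝ C (1/2) = B := by
      rw [hB, ← map_sub]
      congr 1
      field_simp
      ring
    show s.nabla X Y + s.psi Y • X + s.psi X • Y + s.phi Y • X - s.phi X • Y = _
    unfold GeomSetup.psi GeomSetup.phi
    rw [← hc1, ← hc2, ← hP, ← hP]
    module
  -- curvature of tnabla
  have hcurv : ∀ X Y Z : V, s.curv s.tnabla X Y Z =
      s.curv s.nabla X Y Z + ((A * A) * (P Y * P Z)) • X - ((A * A) * (P X * P Z)) • Y := by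
    intro X Y Z
    unfold GeomSetup.curv
    simp only [hT, s.bracket_eq, nSubL, s.nabla_add_right, s.nabla_leibniz, s.nabla_add_left,
      s.nabla_smul_left, map_add, map_sub, map_smul, s.D_mul, DA, DB, DP, smul_eq_mul,
      mul_zero, add_zero, zero_add]
    module
  -- key frame identity
  have key : ∀ Y : V, (∑ i, s.g Y (e i) * P (e i)) = P Y := by
    intro Y
    conv_rhs => rw [hspan Y]
    rw [map_sum]
    simp [smul_eq_mul]
  -- Ricci of tnabla
  have hric : ∀ Y Z : V, s.Ric e s.tnabla Y Z =
      s.Ric e s.nabla Y Z + ((A * A) * ((n:C) - 1)) * (P Y * P Z) := by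
    intro Y Z
    unfold GeomSetup.Ric
    simp only [hcurv, s.g_add_left, gsub, s.g_smul_left]
    rw [Finset.sum_sub_distrib, Finset.sum_add_distrib]
    have h1 : (∑ i : Fin n, (A * A * (P Y * P Z)) * s.g (e i) (e i)) =
        (n : C) * (A * A * (P Y * P Z)) := by
      simp [horth, Finset.sum_const, mul_comm]
    have h2 : (∑ i : Fin n, (A * A * (P (e i) * P Z)) * s.g Y (e i)) =
        A * A * P Z * (∑ i, s.g Y (e i) * P (e i)) := by
      rw [Finset.mul_sum]
      exact Finset.sum_congr rfl fun i _ => by ring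
    rw [h1, h2, key]
    ring
  -- lambda identity
  have hlam : s.lam = -(A * A) := by
    unfold GeomSetup.lam
    rw [hA, ← map_mul, ← map_neg]
    congr 1
    field_simp
  -- finish
  intro Y Z
  have h := hric Y Z
  rw [hRicFlat Y Z] at h
  rw [hlam, ← hP, ← hP]
  linear_combination -h
end

section
/- If ξ is a parallel unit vector field, then R̃(X,Y)ξ = λ(π(X)Y − π(Y)X) with λ = −n²/(n+1)²; i.e., ξ belongs to the λ-nullity distribution of the projective semi-symmetric connection. -/
open GeomSetup

namespace GeomSetupAux

variable {n : ℕ} {C V : Type*} [CommRing C] [Algebra ℝ C] [AddCommGroup V] [Module C V]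
  (s : GeomSetup n C V)

lemma g_zero_left (Y : V) : s.g 0 Y = 0 := by
  have h := s.g_smul_left 0 0 Y
  simpa using h

lemma g_zero_right (X : V) : s.g X 0 = 0 := by
  rw [s.g_symm]; exact g_zero_left s X

lemma pi1_add (X Y : V) : s.pi1 (X + Y) = s.pi1 X + s.pi1 Y := s.g_add_left X Y s.xi

lemma pi1_smul (f : C) (X : V) : s.pi1 (f • X) = f * s.pi1 X := s.g_smul_left f X s.xi

lemma pi1_sub (X Y : V) : s.pi1 (X - Y) = s.pi1 X - s.pi1 Y := by
  have h := pi1_add s X (-Y)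
  have h2 : s.pi1 (-Y) = -s.pi1 Y := by
    have := pi1_smul s (-1) Y; simpa using this
  rw [h2] at h
  simpa [sub_eq_add_neg] using h

lemma pi1_xi : s.pi1 s.xi = 1 := s.xi_unit

lemma psi_eq (X : V) : s.psi X = algebraMap ℝ C (((n : ℝ) - 1) / (2 * ((n : ℝ) + 1))) * s.pi1 X := rfl

lemma D_pi1 (hpar : ∀ X : V, s.nabla X s.xi = 0) (X Y : V) :
    s.D X (s.pi1 Y) = s.pi1 (s.nabla X Y) := by
  unfold GeomSetup.pi1
  rw [s.compat, hpar, g_zero_right, add_zero]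

lemma tnabla_add_right (X Y Z : V) :
    s.tnabla X (Y + Z) = s.tnabla X Y + s.tnabla X Z := by
  unfold GeomSetup.tnabla GeomSetup.psi GeomSetup.phi
  rw [s.nabla_add_right, pi1_add]
  module

lemma tnabla_leibniz (X : V) (f : C) (Y : V) :
    s.tnabla X (f • Y) = f • s.tnabla X Y + s.D X f • Y := by
  unfold GeomSetup.tnabla GeomSetup.psi GeomSetup.phi
  rw [s.nabla_leibniz, pi1_smul]
  module

variable {s}

lemma hn1 : ((n : ℝ) + 1) ≠ 0 := by positivity

lemma tnabla_xi (hpar : ∀ X : V, s.nabla X s.xi = 0) (X : V) :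
    s.tnabla X s.xi = (algebraMap ℝ C ((n : ℝ) / ((n : ℝ) + 1))) • X
      + ((algebraMap ℝ C (-1 / ((n : ℝ) + 1))) * s.pi1 X) • s.xi := by
  unfold GeomSetup.tnabla GeomSetup.psi GeomSetup.phi
  rw [hpar, pi1_xi]
  have h1 : ((n : ℝ) - 1) / (2 * ((n : ℝ) + 1)) + 1 / 2 = (n : ℝ) / ((n : ℝ) + 1) := by
    field_simp; ring
  have h2 : ((n : ℝ) - 1) / (2 * ((n : ℝ) + 1)) - 1 / 2 = -1 / ((n : ℝ) + 1) := by
    field_simp; ring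
  rw [← h1, ← h2, map_add, map_sub]
  simp only [mul_one, add_smul, sub_smul, sub_mul, mul_smul]
  module

lemma tnabla_antisym (X Y : V) :
    s.tnabla X Y - s.tnabla Y X = s.bracket X Y + s.pi1 Y • X - s.pi1 X • Y := by
  unfold GeomSetup.tnabla GeomSetup.psi GeomSetup.phi
  rw [s.bracket_eq]
  have h : algebraMap ℝ C (1 / 2) + algebraMap ℝ C (1 / 2) = 1 := by
    rw [← map_add]; norm_num
  match_scalars
  · ring
  · linear_combination s.pi1 Y * h
  · linear_combination (-s.pi1 X) * h
  · ring

lemma step (hpar : ∀ X : V, s.nabla X s.xi = 0) (X Y : V) :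
    s.tnabla X (s.tnabla Y s.xi)
      = (algebraMap ℝ C ((n : ℝ) / ((n : ℝ) + 1))) • s.tnabla X Y
        + ((algebraMap ℝ C (-1 / ((n : ℝ) + 1))) * s.pi1 Y
            * algebraMap ℝ C ((n : ℝ) / ((n : ℝ) + 1))) • X
        + ((algebraMap ℝ C (-1 / ((n : ℝ) + 1))) * s.pi1 Y
            * ((algebraMap ℝ C (-1 / ((n : ℝ) + 1))) * s.pi1 X)) • s.xi
        + ((algebraMap ℝ C (-1 / ((n : ℝ) + 1))) * s.pi1 (s.nabla X Y)) • s.xi := by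
  rw [tnabla_xi hpar Y, tnabla_add_right, tnabla_leibniz, tnabla_leibniz,
    tnabla_xi hpar X, s.D_const, s.D_mul, D_pi1 s hpar, s.D_const]
  simp only [mul_zero, zero_add, add_zero, zero_smul, mul_smul, smul_add]
  module

end GeomSetupAux

open GeomSetupAux

theorem stmt11 {n : ℕ} {C V : Type*} [CommRing C] [Algebra ℝ C]
    [AddCommGroup V] [Module C V] (s : GeomSetup n C V) (hpar : ∀ X : V, s.nabla X s.xi = 0) :
    ∀ X Y : V, s.curv s.tnabla X Y s.xi = s.lam • (s.pi1 X • Y - s.pi1 Y • X) := by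
  intro X Y
  set p : C := algebraMap ℝ C ((n : ℝ) / ((n : ℝ) + 1)) with hp
  set q : C := algebraMap ℝ C (-1 / ((n : ℝ) + 1)) with hq
  have hkey : p + p * q = - s.lam := by
    rw [hp, hq]
    unfold GeomSetup.lam
    rw [← map_mul, ← map_add, ← map_neg]
    congr 1
    have h := hn1 (n := n)
    field_simp
    ring
  have hbr : s.pi1 (s.bracket X Y) = s.pi1 (s.nabla X Y) - s.pi1 (s.nabla Y X) := by
    rw [s.bracket_eq, pi1_sub]
  unfold GeomSetup.curv
  rw [step hpar X Y, step hpar Y X, tnabla_xi hpar (s.bracket X Y), hbr]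
  have hanti := tnabla_antisym (s := s) X Y
  have : s.tnabla X Y = s.tnabla Y X + (s.bracket X Y + s.pi1 Y • X - s.pi1 X • Y) := by
    rw [← hanti]; abel
  rw [this, ← hp, ← hq]
  have hlam : s.lam = -(p + p * q) := by rw [hkey]; ring
  rw [hlam]
  module
end

section
/- Let ξ be a parallel unit vector field. If the projective semi-symmetric connection ∇̃ is flat (R̃ = 0), then the Levi-Civita curvature satisfies R(X,Y)Z = λ(π(Y)π(Z)X − π(X)π(Z)Y) with λ = −n²/(n+1)², and the Ricci tensor satisfies S(Y,Z) = λ(n−1)π(Y)π(Z); consequently the Weyl projective curvature tensor P of ∇ vanishes. -/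
open GeomSetup

section Aux

variable {n : ℕ} {C V : Type*} [CommRing C] [Algebra ℝ C] [AddCommGroup V] [Module C V]
variable (s : GeomSetup n C V)

lemma g_zero_left (Y : V) : s.g 0 Y = 0 := by
  have := s.g_smul_left 0 0 Y
  simpa using this

lemma g_zero_right (Y : V) : s.g Y 0 = 0 := by
  rw [s.g_symm]; exact g_zero_left s Y

lemma g_neg_left (X Y : V) : s.g (-X) Y = - s.g X Y := by
  rw [← neg_one_smul C X, s.g_smul_left]; ring

lemma g_sub_left (X Y Z : V) : s.g (X - Y) Z = s.g X Z - s.g Y Z := by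
  rw [sub_eq_add_neg, s.g_add_left, g_neg_left]; ring

lemma g_sum_left {ι : Type*} (F : Finset ι) (f : ι → V) (Z : V) :
    s.g (∑ i ∈ F, f i) Z = ∑ i ∈ F, s.g (f i) Z :=
  map_sum (AddMonoidHom.mk' (fun X => s.g X Z) (fun a b => s.g_add_left a b Z)) f F

lemma pi1_add (X Y : V) : s.pi1 (X + Y) = s.pi1 X + s.pi1 Y := s.g_add_left X Y s.xi

lemma pi1_smul (f : C) (X : V) : s.pi1 (f • X) = f * s.pi1 X := s.g_smul_left f X s.xi

lemma pi1_sub (X Y : V) : s.pi1 (X - Y) = s.pi1 X - s.pi1 Y := g_sub_left s X Y s.xi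

lemma nabla_neg_left (X Y : V) : s.nabla (-X) Y = - s.nabla X Y := by
  rw [← neg_one_smul C X, s.nabla_smul_left, neg_one_smul]

lemma nabla_sub_left (X Y Z : V) : s.nabla (X - Y) Z = s.nabla X Z - s.nabla Y Z := by
  rw [sub_eq_add_neg, s.nabla_add_left, nabla_neg_left, sub_eq_add_neg]

lemma D_pi1 (hpar : ∀ X : V, s.nabla X s.xi = 0) (X Y : V) :
    s.D X (s.pi1 Y) = s.pi1 (s.nabla X Y) := by
  unfold GeomSetup.pi1
  rw [s.compat, hpar, g_zero_right, add_zero]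

/-- Curvature of a perturbed connection `∇_X Y + (A π(Y))•X + (B π(X))•Y` with `A,B`
constants, when `ξ` is parallel. -/
lemma curv_pert (hpar : ∀ X : V, s.nabla X s.xi = 0) (A B : C)
    (hA : ∀ X : V, s.D X A = 0) (hB : ∀ X : V, s.D X B = 0) (X Y Z : V) :
    s.curv (fun X Y => s.nabla X Y + (A * s.pi1 Y) • X + (B * s.pi1 X) • Y) X Y Z
      = s.curv s.nabla X Y Z
        + ((A * s.pi1 Y) * (A * s.pi1 Z)) • X - ((A * s.pi1 X) * (A * s.pi1 Z)) • Y := by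
  have hDA : ∀ U W : V, s.D U (A * s.pi1 W) = A * s.pi1 (s.nabla U W) := by
    intro U W
    rw [s.D_mul, hA, D_pi1 s hpar]; ring
  have hDB : ∀ U W : V, s.D U (B * s.pi1 W) = B * s.pi1 (s.nabla U W) := by
    intro U W
    rw [s.D_mul, hB, D_pi1 s hpar]; ring
  simp only [GeomSetup.curv, s.bracket_eq, nabla_sub_left, s.nabla_add_left,
    s.nabla_add_right, s.nabla_leibniz, hDA, hDB, pi1_add s, pi1_smul s, pi1_sub s,
    s.nabla_smul_left]
  module

end Aux

theorem stmt15 {n : ℕ} {C V : Type*} [CommRing C] [Algebra ℝ C]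
    [AddCommGroup V] [Module C V] (s : GeomSetup n C V) (hn : 2 < n) (hpar : ∀ X : V, s.nabla X s.xi = 0) (e : Fin n → V)
    (horth : ∀ i j, s.g (e i) (e j) = if i = j then 1 else 0)
    (hspan : ∀ v : V, v = ∑ i, s.g v (e i) • e i)
    (hflat : ∀ X Y Z : V, s.curv s.tnabla X Y Z = 0) :
    (∀ X Y Z : V, s.curv s.nabla X Y Z =
        s.lam • ((s.pi1 Y * s.pi1 Z) • X - (s.pi1 X * s.pi1 Z) • Y)) ∧
    (∀ Y Z : V, s.Ric e s.nabla Y Z = (s.lam * ((n : C) - 1)) * (s.pi1 Y * s.pi1 Z)) ∧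
    (∀ X Y Z : V,
      s.curv s.nabla X Y Z -
        algebraMap ℝ C (1 / ((n : ℝ) - 1)) •
          (s.Ric e s.nabla Y Z • X - s.Ric e s.nabla X Z • Y) = 0) := by
  have hne : ((n : ℝ) + 1) ≠ 0 := by positivity
  set α : ℝ := ((n : ℝ) - 1) / (2 * ((n : ℝ) + 1)) with hα
  set A : C := algebraMap ℝ C (α + 1 / 2) with hA
  set B : C := algebraMap ℝ C (α - 1 / 2) with hB
  have hDA : ∀ X : V, s.D X A = 0 := fun X => s.D_const X _
  have hDB : ∀ X : V, s.D X B = 0 := fun X => s.D_const X _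
  have htn : s.tnabla = fun X Y => s.nabla X Y + (A * s.pi1 Y) • X + (B * s.pi1 X) • Y := by
    funext X Y
    simp only [GeomSetup.tnabla, GeomSetup.psi, GeomSetup.phi, hA, hB, ← hα, map_add, map_sub]
    module
  have hlam : s.lam = -(A * A) := by
    rw [hA, ← map_mul, ← map_neg, GeomSetup.lam]
    congr 1
    rw [hα]
    field_simp
    ring
  have c1 : ∀ X Y Z : V, s.curv s.nabla X Y Z =
      s.lam • ((s.pi1 Y * s.pi1 Z) • X - (s.pi1 X * s.pi1 Z) • Y) := by
    intro X Y Z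
    have h := curv_pert s hpar A B hDA hDB X Y Z
    rw [← htn, hflat] at h
    rw [hlam]
    linear_combination (norm := module) -h
  have hkey : ∀ W : V, ∑ i, s.g W (e i) * s.g (e i) s.xi = s.g W s.xi := by
    intro W
    conv_rhs => rw [hspan W]
    rw [g_sum_left]
    simp only [s.g_smul_left]
  have c2 : ∀ Y Z : V, s.Ric e s.nabla Y Z = (s.lam * ((n : C) - 1)) * (s.pi1 Y * s.pi1 Z) := by
    intro Y Z
    have expand : ∀ i, s.g (s.curv s.nabla (e i) Y Z) (e i)
        = s.lam * (s.pi1 Y * s.pi1 Z) - s.lam * s.pi1 Z * (s.g Y (e i) * s.g (e i) s.xi) := by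
      intro i
      rw [c1, s.g_smul_left, g_sub_left, s.g_smul_left, s.g_smul_left, horth]
      rw [if_pos rfl]
      simp only [GeomSetup.pi1]
      rw [s.g_symm Y (e i)]
      ring
    rw [GeomSetup.Ric]
    simp only [expand]
    rw [Finset.sum_sub_distrib, Finset.sum_const, Finset.card_univ, Fintype.card_fin,
      ← Finset.mul_sum, hkey Y]
    simp only [nsmul_eq_mul, GeomSetup.pi1]
    ring
  refine ⟨c1, c2, ?_⟩
  intro X Y Z
  have h1 : algebraMap ℝ C (1 / ((n : ℝ) - 1)) * ((n : C) - 1) = 1 := by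
    have hne1 : ((n : ℝ) - 1) ≠ 0 := by
      have : (2 : ℝ) < (n : ℝ) := by exact_mod_cast hn
      linarith
    rw [show ((n : C) - 1) = algebraMap ℝ C ((n : ℝ) - 1) by
      rw [map_sub, map_natCast, map_one]]
    rw [← map_mul, one_div, inv_mul_cancel₀ hne1, map_one]
  rw [c1, c2 Y Z, c2 X Z]
  match_scalars
  · linear_combination (-s.lam * (s.pi1 Y * s.pi1 Z)) * h1
  · linear_combination (s.lam * (s.pi1 X * s.pi1 Z)) * h1
end
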